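/- For α ≥ 0 and τ ∈ ℝ with σ := 1/√(1+τ²), ∫_0^α x·Φ(τx)·φ(x) dx = τ·σ·φ(0)·(Φ(α/σ) − 1/2) − (φ(α)·Φ(τα) − φ(0)/2). -/

import Mathlib

open MeasureTheory

/-- Standard normal pdf. -/
noncomputable def gpdf (x : ℝ) : ℝ := (Real.sqrt (2 * Real.pi))⁻¹ * Real.exp (-x ^ 2 / 2)

/-- Standard normal cdf. -/
noncomputable def gcdf (x : ℝ) : ℝ := ∫ t in Set.Iic x, gpdf t

/-!
The antiderivative is `F x = -φ(x) Φ(τx) + τ σ φ(0) Φ(x/σ)`. Differentiating the first summand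
gives the integrand minus `τ φ(x) φ(τx)`, and since `x² + (τx)² = (x/σ)²` the Gaussian product
`φ(x) φ(τx)` equals `φ(0) φ(x/σ)`, which is exactly what the second summand differentiates to.
-/

lemma gpdf_eq_gaussianPDFReal : gpdf = ProbabilityTheory.gaussianPDFReal 0 1 := by
  ext x
  simp [gpdf, ProbabilityTheory.gaussianPDFReal]

@[fun_prop]
lemma continuous_gpdf : Continuous gpdf := by
  unfold gpdf
  fun_prop

lemma integrable_gpdf : Integrable gpdf := by
  rw [gpdf_eq_gaussianPDFReal]
  exact ProbabilityTheory.integrable_gaussianPDFReal 0 1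

lemma integral_gpdf : ∫ x, gpdf x = 1 := by
  rw [gpdf_eq_gaussianPDFReal]
  exact ProbabilityTheory.integral_gaussianPDFReal_eq_one 0 one_ne_zero

lemma gpdf_neg (x : ℝ) : gpdf (-x) = gpdf x := by
  simp [gpdf]

lemma hasDerivAt_gpdf (x : ℝ) : HasDerivAt gpdf (-x * gpdf x) x := by
  have hsq : HasDerivAt (fun x : ℝ => -x ^ 2 / 2) (-x) x :=
    ((hasDerivAt_pow 2 x).neg.div_const 2).congr_deriv (by ring)
  exact (hsq.exp.const_mul (Real.sqrt (2 * Real.pi))⁻¹).congr_deriv (by unfold gpdf; ring)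

lemma gpdf_mul_gpdf {x y z : ℝ} (h : z ^ 2 = x ^ 2 + y ^ 2) :
    gpdf x * gpdf y = gpdf 0 * gpdf z := by
  have hexp : Real.exp (-x ^ 2 / 2) * Real.exp (-y ^ 2 / 2) = Real.exp (-z ^ 2 / 2) := by
    rw [← Real.exp_add, h]
    ring_nf
  rw [gpdf, gpdf, gpdf, gpdf, mul_mul_mul_comm, hexp]
  norm_num
  ring

lemma gcdf_add_gcdf_neg (x : ℝ) : gcdf x + gcdf (-x) = 1 := by
  have hneg : gcdf (-x) = ∫ t in Set.Ioi x, gpdf t := by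
    have hsymm : ∫ t in Set.Iic (-x), gpdf t = ∫ t in Set.Iic (-x), gpdf (-t) := by
      simp only [gpdf_neg]
    rw [gcdf, hsymm, integral_comp_neg_Iic, neg_neg]
  rw [hneg, gcdf, intervalIntegral.integral_Iic_add_Ioi integrable_gpdf.integrableOn
    integrable_gpdf.integrableOn, integral_gpdf]

lemma gcdf_zero : gcdf 0 = 1 / 2 := by
  have h := gcdf_add_gcdf_neg 0
  rw [neg_zero] at h
  linarith

lemma hasDerivAt_gcdf (x : ℝ) : HasDerivAt gcdf (gpdf x) x := by
  have hgcdf : ∀ y, gcdf 0 + ∫ t in (0 : ℝ)..y, gpdf t = gcdf y := fun y => by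
    rw [← intervalIntegral.integral_Iic_sub_Iic integrable_gpdf.integrableOn
      integrable_gpdf.integrableOn, gcdf, gcdf]
    ring
  refine ((intervalIntegral.integral_hasDerivAt_right (a := 0) integrable_gpdf.intervalIntegrable
    integrable_gpdf.aestronglyMeasurable.stronglyMeasurableAtFilter
    continuous_gpdf.continuousAt).const_add (gcdf 0)).congr_of_eventuallyEq ?_
  exact Filter.Eventually.of_forall fun y => (hgcdf y).symm

@[fun_prop]
lemma continuous_gcdf : Continuous gcdf :=
  continuous_iff_continuousAt.2 fun x => (hasDerivAt_gcdf x).continuousAt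

lemma hasDerivAt_neg_gpdf_mul_gcdf_mul (τ x : ℝ) :
    HasDerivAt (fun x => -(gpdf x * gcdf (τ * x)))
      (x * gcdf (τ * x) * gpdf x - τ * (gpdf x * gpdf (τ * x))) x := by
  have hlin : HasDerivAt (fun y : ℝ => τ * y) τ x := by
    simpa using (hasDerivAt_id x).const_mul τ
  exact ((hasDerivAt_gpdf x).mul ((hasDerivAt_gcdf (τ * x)).comp x hlin)).neg.congr_deriv
    (by simp only [Function.comp_apply]; ring)

lemma hasDerivAt_gcdf_div {σ : ℝ} (hσ : σ ≠ 0) (x : ℝ) :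
    HasDerivAt (fun x => σ * gcdf (x / σ)) (gpdf (x / σ)) x := by
  have hdiv : HasDerivAt (fun y : ℝ => y / σ) (1 / σ) x := by
    simpa using (hasDerivAt_id x).div_const σ
  exact (((hasDerivAt_gcdf (x / σ)).comp x hdiv).const_mul σ).congr_deriv
    (by rw [mul_comm, mul_one_div, div_mul_cancel₀ _ hσ])

lemma integral_mul_gcdf_mul_mul_gpdf {τ σ : ℝ} (hσ : σ ^ 2 * (1 + τ ^ 2) = 1) (a b : ℝ) :
    ∫ x in a..b, x * gcdf (τ * x) * gpdf x =
      (-(gpdf b * gcdf (τ * b)) + τ * gpdf 0 * (σ * gcdf (b / σ))) -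
        (-(gpdf a * gcdf (τ * a)) + τ * gpdf 0 * (σ * gcdf (a / σ))) := by
  have hσ0 : σ ≠ 0 := by rintro rfl; simp at hσ
  have hprod : ∀ x, gpdf x * gpdf (τ * x) = gpdf 0 * gpdf (x / σ) := fun x =>
    gpdf_mul_gpdf (by field_simp; linear_combination (-x ^ 2) * hσ)
  have hcont : Continuous fun x => x * gcdf (τ * x) * gpdf x := by fun_prop
  refine intervalIntegral.integral_eq_sub_of_hasDerivAt
    (f := fun x => -(gpdf x * gcdf (τ * x)) + τ * gpdf 0 * (σ * gcdf (x / σ)))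
    (fun x _ => ?_) (hcont.intervalIntegrable a b)
  refine ((hasDerivAt_neg_gpdf_mul_gcdf_mul τ x).add
    ((hasDerivAt_gcdf_div hσ0 x).const_mul (τ * gpdf 0))).congr_deriv ?_
  rw [hprod]
  ring

theorem stmt14_general (α τ : ℝ) :
    let σ : ℝ := 1 / Real.sqrt (1 + τ ^ 2)
    (∫ x in (0 : ℝ)..α, x * gcdf (τ * x) * gpdf x) =
      τ * σ * gpdf 0 * (gcdf (α / σ) - 1 / 2) - (gpdf α * gcdf (τ * α) - gpdf 0 / 2) := by
  intro σ
  have hσ : σ ^ 2 * (1 + τ ^ 2) = 1 := by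
    simp only [σ, div_pow, one_pow, Real.sq_sqrt (by positivity : (0 : ℝ) ≤ 1 + τ ^ 2)]
    field_simp
  rw [integral_mul_gcdf_mul_mul_gpdf hσ, mul_zero, zero_div, gcdf_zero]
  ring

/-- For α ≥ 0, τ ∈ ℝ, σ = 1/√(1+τ²),
∫₀^α x·Φ(τx)·φ(x)dx = τσφ(0)(Φ(α/σ) − 1/2) − (φ(α)Φ(τα) − φ(0)/2). -/
theorem stmt14 (α τ : ℝ) (hα : 0 ≤ α) :
    let σ : ℝ := 1 / Real.sqrt (1 + τ ^ 2)
    (∫ x in (0 : ℝ)..α, x * gcdf (τ * x) * gpdf x) =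
      τ * σ * gpdf 0 * (gcdf (α / σ) - 1 / 2) - (gpdf α * gcdf (τ * α) - gpdf 0 / 2) :=
  stmt14_general α τ
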